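/- Let u₀ ∈ E and t ≥ 0. For each k ∈ ℕ the function x ↦ (t^{α(x)·k}/Γ(α(x)·k + 1)) · (Aᵏu₀)(x) represents an element vₖ(t) of E, the series Σₖ vₖ(t) converges absolutely in E (i.e., Σₖ ‖vₖ(t)‖ < ∞), and there exists a constant M > 0, independent of t and u₀, such that its sum S(t) ∈ E satisfies ‖S(t)‖ ≤ M · exp(‖A‖^{1/α₀} · t) · ‖u₀‖ whenever 0 ≤ t ≤ 1, and ‖S(t)‖ ≤ M · exp(‖A‖^{1/α₀} · t^{a/α₀}) · ‖u₀‖ whenever t > 1. -/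

import Mathlib

open MeasureTheory Real Set Filter
open scoped ENNReal Topology

private lemma aux_gamma_ge (m : ℕ) (hm : 1 ≤ m) {q : ℝ} (hq : (m : ℝ) + 1 ≤ q) :
    ((Nat.factorial m : ℕ) : ℝ) * (m : ℝ) ^ (q - ((m : ℝ) + 1)) ≤ Real.Gamma q := by
  have hm' : (1 : ℝ) ≤ (m : ℝ) := by exact_mod_cast hm
  have hmpos : (0 : ℝ) < m := by linarith
  have hfac : Real.Gamma ((m : ℝ) + 1) = ((Nat.factorial m : ℕ) : ℝ) := Real.Gamma_nat_eq_factorial m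
  rcases eq_or_lt_of_le hq with h | h
  · rw [← h, sub_self, Real.rpow_zero, mul_one, hfac]
  · have hΓm : 0 < Real.Gamma (m : ℝ) := Real.Gamma_pos_of_pos hmpos
    have hΓq : 0 < Real.Gamma q := Real.Gamma_pos_of_pos (by linarith)
    have hslope := Real.convexOn_log_Gamma.slope_mono_adjacent
      (x := (m : ℝ)) (y := (m : ℝ) + 1) (z := q)
      (Set.mem_Ioi.mpr hmpos) (Set.mem_Ioi.mpr (by linarith)) (by linarith) h
    simp only [Function.comp_apply] at hslope
    have h1 : Real.Gamma ((m : ℝ) + 1) = (m : ℝ) * Real.Gamma (m : ℝ) :=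
      Real.Gamma_add_one (ne_of_gt hmpos)
    have h2 : Real.log (Real.Gamma ((m : ℝ) + 1)) - Real.log (Real.Gamma (m : ℝ))
        = Real.log (m : ℝ) := by
      rw [h1, Real.log_mul (ne_of_gt hmpos) (ne_of_gt hΓm)]; ring
    have hden : (0 : ℝ) < q - ((m : ℝ) + 1) := by linarith
    rw [show ((m : ℝ) + 1 - (m : ℝ)) = 1 by ring, div_one, h2, le_div_iff₀ hden] at hslope
    have key : Real.log ((Nat.factorial m : ℕ) : ℝ) + (q - ((m : ℝ) + 1)) * Real.log (m : ℝ)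
        ≤ Real.log (Real.Gamma q) := by
      rw [← hfac]; nlinarith [hslope]
    calc ((Nat.factorial m : ℕ) : ℝ) * (m : ℝ) ^ (q - ((m : ℝ) + 1))
        = Real.exp (Real.log ((Nat.factorial m : ℕ) : ℝ) + (q - ((m : ℝ) + 1)) * Real.log (m : ℝ)) := by
          rw [Real.exp_add, Real.exp_log (by positivity), Real.rpow_def_of_pos hmpos,
            mul_comm (Real.log (m : ℝ))]
      _ ≤ Real.exp (Real.log (Real.Gamma q)) := Real.exp_le_exp.mpr key
      _ = Real.Gamma q := Real.exp_log hΓq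

private lemma aux_gamma_half {q : ℝ} (hq : 1 ≤ q) : (1 / 2 : ℝ) ≤ Real.Gamma q := by
  rcases le_or_gt 2 q with h | h
  · have h' := aux_gamma_ge 1 le_rfl (q := q) (by push_cast; linarith)
    simp only [Nat.cast_one, Nat.factorial_one, Real.one_rpow, mul_one] at h'
    linarith
  · rcases eq_or_lt_of_le hq with h1 | h1
    · rw [← h1, Real.Gamma_one]; norm_num
    · have hΓq : 0 < Real.Gamma q := Real.Gamma_pos_of_pos (by linarith)
      have hslope := Real.convexOn_log_Gamma.slope_mono_adjacent
        (x := q) (y := 2) (z := 3)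
        (Set.mem_Ioi.mpr (by linarith)) (Set.mem_Ioi.mpr (by norm_num)) h (by norm_num)
      simp only [Function.comp_apply] at hslope
      have hΓ2 : Real.Gamma 2 = 1 := Real.Gamma_two
      have hΓ3 : Real.Gamma 3 = 2 := by
        have := Real.Gamma_nat_eq_factorial 2
        norm_num at this; convert this using 2 <;> norm_num
      rw [hΓ2, hΓ3] at hslope
      simp only [Real.log_one, zero_sub, sub_zero] at hslope
      rw [show (3 : ℝ) - 2 = 1 by norm_num, div_one, div_le_iff₀ (by linarith)] at hslope
      -- hslope : -Real.log (Real.Gamma q) ≤ Real.log 2 * (2 - q)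
      have hlog2 : (0 : ℝ) ≤ Real.log 2 := Real.log_nonneg (by norm_num)
      have : -Real.log 2 ≤ Real.log (Real.Gamma q) := by nlinarith
      calc (1 / 2 : ℝ) = Real.exp (-Real.log 2) := by
            rw [Real.exp_neg, Real.exp_log (by norm_num)]; norm_num
        _ ≤ Real.exp (Real.log (Real.Gamma q)) := Real.exp_le_exp.mpr this
        _ = Real.Gamma q := Real.exp_log hΓq

noncomputable def Hf (s : ℝ) : ℝ :=
  ((Nat.factorial (Nat.floor s) : ℕ) : ℝ) * (max 1 ((Nat.floor s : ℕ) : ℝ)) ^ (s - ((Nat.floor s : ℕ) : ℝ))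

private lemma Hf_pos (s : ℝ) : 0 < Hf s := by
  have h1 : (0 : ℝ) < max 1 ((Nat.floor s : ℕ) : ℝ) := lt_of_lt_of_le one_pos (le_max_left _ _)
  unfold Hf
  exact mul_pos (by positivity) (Real.rpow_pos_of_pos h1 _)

private lemma half_Hf_le_gamma {s y : ℝ} (hs : 0 ≤ s) (hy : s ≤ y) :
    Hf s / 2 ≤ Real.Gamma (y + 1) := by
  have hms : ((Nat.floor s : ℕ) : ℝ) ≤ s := Nat.floor_le hs
  rcases Nat.eq_zero_or_pos (Nat.floor s) with h0 | h1
  · have hH : Hf s = 1 := by simp [Hf, h0]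
    rw [hH]
    exact aux_gamma_half (by linarith)
  · have hm1 : (1 : ℝ) ≤ ((Nat.floor s : ℕ) : ℝ) := by exact_mod_cast h1
    have hmax : max 1 ((Nat.floor s : ℕ) : ℝ) = ((Nat.floor s : ℕ) : ℝ) := max_eq_right hm1
    have hkey := aux_gamma_ge (Nat.floor s) h1 (q := y + 1) (by linarith)
    have hexp : y + 1 - (((Nat.floor s : ℕ) : ℝ) + 1) = y - ((Nat.floor s : ℕ) : ℝ) := by ring
    rw [hexp] at hkey
    have hmono : ((Nat.factorial (Nat.floor s) : ℕ) : ℝ) * ((Nat.floor s : ℕ) : ℝ) ^ (s - ((Nat.floor s : ℕ) : ℝ))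
        ≤ ((Nat.factorial (Nat.floor s) : ℕ) : ℝ) * ((Nat.floor s : ℕ) : ℝ) ^ (y - ((Nat.floor s : ℕ) : ℝ)) := by
      apply mul_le_mul_of_nonneg_left _ (by positivity)
      exact Real.rpow_le_rpow_of_exponent_le hm1 (by linarith)
    have hH : Hf s = ((Nat.factorial (Nat.floor s) : ℕ) : ℝ) * ((Nat.floor s : ℕ) : ℝ) ^ (s - ((Nat.floor s : ℕ) : ℝ)) := by
      rw [Hf, hmax]
    have hHpos := Hf_pos s
    rw [hH] at hHpos ⊢
    linarith

private lemma term_le_T {z s : ℝ} (hz : 0 ≤ z) (hs : 0 ≤ s) :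
    z ^ s / Hf s ≤ z ^ (Nat.floor s) / ((Nat.factorial (Nat.floor s) : ℕ) : ℝ)
      + 2 * (z ^ (Nat.floor s + 1) / ((Nat.factorial (Nat.floor s + 1) : ℕ) : ℝ)) := by
  set m := Nat.floor s with hmdef
  have hms : ((m : ℕ) : ℝ) ≤ s := Nat.floor_le hs
  have hsm1 : s < (m : ℝ) + 1 := by exact_mod_cast Nat.lt_floor_add_one s
  rcases Nat.eq_zero_or_pos m with h0 | h1
  · have hH : Hf s = 1 := by simp [Hf, ← hmdef, h0]
    rw [hH, h0] -- careful
    simp only [pow_zero, Nat.factorial_zero, Nat.cast_one, zero_add, pow_one,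
      Nat.factorial_one, div_one]
    have hs1 : s < 1 := by rw [h0] at hsm1; simpa using hsm1
    rcases le_or_gt z 1 with hz1 | hz1
    · have : z ^ s ≤ 1 := Real.rpow_le_one hz hz1 hs
      linarith
    · have : z ^ s ≤ z ^ (1 : ℝ) := Real.rpow_le_rpow_of_exponent_le (le_of_lt hz1) (le_of_lt hs1)
      rw [Real.rpow_one] at this
      linarith
  · have hm1 : (1 : ℝ) ≤ ((m : ℕ) : ℝ) := by exact_mod_cast h1
    have hmpos : (0 : ℝ) < (m : ℝ) := by linarith
    have hmax : max 1 ((m : ℕ) : ℝ) = ((m : ℕ) : ℝ) := max_eq_right hm1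
    have hH : Hf s = ((Nat.factorial m : ℕ) : ℝ) * ((m : ℕ) : ℝ) ^ (s - ((m : ℕ) : ℝ)) := by
      rw [Hf, ← hmdef, hmax]
    rcases eq_or_lt_of_le hz with rfl | hzpos
    · have hspos : s ≠ 0 := by intro h; rw [h] at hms; linarith
      rw [Real.zero_rpow hspos, zero_div]
      positivity
    · have hsplit : z ^ s = z ^ (m : ℕ) * z ^ (s - ((m : ℕ) : ℝ)) := by
        rw [← Real.rpow_natCast z m, ← Real.rpow_add hzpos]
        ring_nf
      have hquot : z ^ s / Hf s
          = (z ^ (m : ℕ) / ((Nat.factorial m : ℕ) : ℝ)) * (z / (m : ℝ)) ^ (s - ((m : ℕ) : ℝ)) := by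
        rw [hH, hsplit, Real.div_rpow hz (by positivity)]
        field_simp
      rw [hquot]
      have hfirst_nn : (0 : ℝ) ≤ z ^ (m : ℕ) / ((Nat.factorial m : ℕ) : ℝ) := by positivity
      rcases le_or_gt z (m : ℝ) with hzm | hzm
      · have hle1 : (z / (m : ℝ)) ^ (s - ((m : ℕ) : ℝ)) ≤ 1 :=
          Real.rpow_le_one (by positivity) (div_le_one_of_le₀ hzm (le_of_lt hmpos)) (by linarith)
        have h2 : (0:ℝ) ≤ 2 * (z ^ (m + 1) / ((Nat.factorial (m+1) : ℕ) : ℝ)) := by positivity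
        nlinarith
      · have hge1 : (1 : ℝ) ≤ z / (m : ℝ) := (one_le_div hmpos).mpr (le_of_lt hzm)
        have hle : (z / (m : ℝ)) ^ (s - ((m : ℕ) : ℝ)) ≤ z / (m : ℝ) := by
          have := Real.rpow_le_rpow_of_exponent_le hge1 (show s - ((m : ℕ) : ℝ) ≤ 1 by linarith)
          rwa [Real.rpow_one] at this
        have hchain : (z ^ (m : ℕ) / ((Nat.factorial m : ℕ) : ℝ)) * (z / (m : ℝ)) ^ (s - ((m : ℕ) : ℝ))
            ≤ z ^ (m + 1) / ((m : ℝ) * ((Nat.factorial m : ℕ) : ℝ)) := by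
          calc (z ^ (m : ℕ) / ((Nat.factorial m : ℕ) : ℝ)) * (z / (m : ℝ)) ^ (s - ((m : ℕ) : ℝ))
              ≤ (z ^ (m : ℕ) / ((Nat.factorial m : ℕ) : ℝ)) * (z / (m : ℝ)) :=
                mul_le_mul_of_nonneg_left hle hfirst_nn
            _ = z ^ (m + 1) / ((m : ℝ) * ((Nat.factorial m : ℕ) : ℝ)) := by
                rw [pow_succ]; field_simp
        have hfin : z ^ (m + 1) / ((m : ℝ) * ((Nat.factorial m : ℕ) : ℝ)) ≤ 2 * (z ^ (m + 1) / ((Nat.factorial (m+1) : ℕ) : ℝ)) := by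
          have hfact : ((Nat.factorial (m+1) : ℕ) : ℝ) = ((m : ℝ) + 1) * ((Nat.factorial m : ℕ) : ℝ) := by
            push_cast [Nat.factorial_succ]; ring
          have hmm : ((m : ℝ) + 1) ≤ 2 * (m : ℝ) := by linarith
          have hzp : (0 : ℝ) ≤ z ^ (m + 1) := by positivity
          have hfp : (0 : ℝ) < ((Nat.factorial m : ℕ) : ℝ) := by positivity
          have hrw : 2 * (z ^ (m + 1) / ((Nat.factorial (m+1) : ℕ) : ℝ))
              = 2 * z ^ (m + 1) / (((m : ℝ) + 1) * ((Nat.factorial m : ℕ) : ℝ)) := by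
            rw [hfact]; ring
          rw [hrw, div_le_div_iff₀ (by positivity) (by positivity)]
          have hkey := mul_nonneg (mul_nonneg hzp hfp.le) (sub_nonneg.mpr hmm)
          nlinarith [hkey]
        have h1' : (0:ℝ) ≤ z ^ (m : ℕ) / ((Nat.factorial m : ℕ) : ℝ) := hfirst_nn
        nlinarith

private lemma sum_bound {α₀ : ℝ} (hα0 : 0 < α₀) {z : ℝ} (hz : 0 ≤ z) :
    Summable (fun k : ℕ => z ^ (α₀ * k) / Hf (α₀ * k)) ∧
    (∑' k : ℕ, z ^ (α₀ * k) / Hf (α₀ * k))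
      ≤ 3 * ((Nat.ceil (1 / α₀) : ℝ) + 1) * Real.exp z := by
  set N : ℕ := Nat.ceil (1 / α₀) with hN
  set T : ℕ → ℝ := fun n => z ^ n / ((Nat.factorial n : ℕ) : ℝ)
      + 2 * (z ^ (n + 1) / ((Nat.factorial (n + 1) : ℕ) : ℝ)) with hT
  have hTnn : ∀ n, 0 ≤ T n := fun n => by rw [hT]; positivity
  have hf1 : Summable (fun n : ℕ => z ^ n / ((Nat.factorial n : ℕ) : ℝ)) :=
    Real.summable_pow_div_factorial z
  have hf2 : Summable (fun n : ℕ => z ^ (n + 1) / ((Nat.factorial (n + 1) : ℕ) : ℝ)) :=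
    hf1.comp_injective (add_left_injective 1)
  have hTs : Summable T := hf1.add (hf2.mul_left 2)
  have hfsum : (∑' n : ℕ, z ^ n / ((Nat.factorial n : ℕ) : ℝ)) ≤ Real.exp z :=
    Summable.tsum_le_of_sum_range_le hf1 (fun n => Real.sum_le_exp_of_nonneg hz n)
  have hf2sum : (∑' n : ℕ, z ^ (n + 1) / ((Nat.factorial (n + 1) : ℕ) : ℝ)) ≤ Real.exp z := by
    have h0 := Summable.tsum_eq_zero_add hf1
    have h00 : z ^ (0:ℕ) / ((Nat.factorial 0 : ℕ) : ℝ) = 1 := by norm_num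
    rw [h00] at h0
    have hnn : (0:ℝ) ≤ 1 := one_pos.le
    linarith
  have hTsum : (∑' n, T n) ≤ 3 * Real.exp z := by
    rw [hT, Summable.tsum_add hf1 (hf2.mul_left 2), tsum_mul_left]
    linarith
  -- comparison function on pairs
  set g : ℕ × ℕ → ℝ := fun p => if p.2 ≤ N then T p.1 else 0 with hg
  have hgnn : ∀ p, 0 ≤ g p := by
    intro p; rw [hg]; dsimp only; split
    · exact hTnn _
    · exact le_rfl
  have hfib : ∀ n : ℕ, Summable fun j : ℕ => g (n, j) := by
    intro n
    apply summable_of_ne_finset_zero (s := Finset.range (N + 1))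
    intro j hj
    simp only [Finset.mem_range, not_lt] at hj
    rw [hg]; dsimp only; rw [if_neg (by omega)]
  have hfibsum : ∀ n : ℕ, (∑' j : ℕ, g (n, j)) = ((N : ℝ) + 1) * T n := by
    intro n
    rw [tsum_eq_sum (s := Finset.range (N + 1)) (by
      intro j hj
      simp only [Finset.mem_range, not_lt] at hj
      rw [hg]; dsimp only; rw [if_neg (by omega)])]
    have : ∀ j ∈ Finset.range (N + 1), g (n, j) = T n := by
      intro j hj
      simp only [Finset.mem_range] at hj
      rw [hg]; dsimp only; rw [if_pos (by omega)]
    rw [Finset.sum_congr rfl this, Finset.sum_const, Finset.card_range, nsmul_eq_mul]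
    push_cast; ring
  have hgs : Summable g := by
    rw [summable_prod_of_nonneg hgnn]
    refine ⟨hfib, ?_⟩
    have : (fun n => ∑' j : ℕ, g (n, j)) = fun n => ((N : ℝ) + 1) * T n := funext hfibsum
    rw [this]
    exact hTs.mul_left _
  have hgsum : (∑' p, g p) ≤ 3 * ((N : ℝ) + 1) * Real.exp z := by
    rw [Summable.tsum_prod' hgs hfib]
    have : (∑' n : ℕ, ∑' j : ℕ, g (n, j)) = ((N : ℝ) + 1) * ∑' n, T n := by
      rw [← tsum_mul_left]
      exact tsum_congr hfibsum
    rw [this]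
    calc ((N : ℝ) + 1) * ∑' n, T n ≤ ((N : ℝ) + 1) * (3 * Real.exp z) := by
          apply mul_le_mul_of_nonneg_left hTsum (by positivity)
      _ = 3 * ((N : ℝ) + 1) * Real.exp z := by ring
  -- the injection
  set L : ℕ → ℕ := fun n => Nat.ceil ((n : ℝ) / α₀) with hL
  set e : ℕ → ℕ × ℕ := fun k => (Nat.floor (α₀ * k), k - L (Nat.floor (α₀ * k))) with he
  have hLle : ∀ k : ℕ, L (Nat.floor (α₀ * k)) ≤ k := by
    intro k
    rw [hL]; dsimp only
    rw [Nat.ceil_le, div_le_iff₀ hα0, mul_comm]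
    exact Nat.floor_le (by positivity)
  have he_inj : Function.Injective e := by
    intro k1 k2 h
    rw [he] at h; dsimp only at h
    rw [Prod.mk.injEq] at h
    obtain ⟨h1, h2⟩ := h
    have l1 := hLle k1
    have l2 := hLle k2
    rw [h1] at l1 h2
    omega
  have hcount : ∀ k : ℕ, (e k).2 ≤ N := by
    intro k
    rw [he]; dsimp only
    set n := Nat.floor (α₀ * k) with hn
    have h1 : (α₀ * k) < (n : ℝ) + 1 := Nat.lt_floor_add_one _
    have h2 : (k : ℝ) < ((n : ℝ) + 1) / α₀ := by
      rw [lt_div_iff₀ hα0]; linarith [h1]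
    have h3 : ((n : ℝ)) / α₀ ≤ (L n : ℝ) := Nat.le_ceil _
    have h4 : (1 : ℝ) / α₀ ≤ (N : ℝ) := Nat.le_ceil _
    have h5 : (k : ℝ) < (L n : ℝ) + (N : ℝ) := by
      have : ((n : ℝ) + 1) / α₀ = (n : ℝ) / α₀ + 1 / α₀ := by ring
      linarith
    have h6 : k < L n + N := by exact_mod_cast h5
    omega
  have htermwise : ∀ k : ℕ, z ^ (α₀ * k) / Hf (α₀ * k) ≤ g (e k) := by
    intro k
    have hb := term_le_T hz (s := α₀ * k) (by positivity)
    have hc := hcount k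
    rw [he] at hc ⊢; dsimp only at hc ⊢
    rw [hg]; dsimp only
    rw [if_pos hc]
    exact hb
  have hlhs_nn : ∀ k : ℕ, 0 ≤ z ^ (α₀ * k) / Hf (α₀ * k) := by
    intro k
    have := Hf_pos (α₀ * k)
    positivity
  have hsummable : Summable (fun k : ℕ => z ^ (α₀ * k) / Hf (α₀ * k)) :=
    Summable.of_nonneg_of_le hlhs_nn htermwise (hgs.comp_injective he_inj)
  refine ⟨hsummable, ?_⟩
  calc (∑' k : ℕ, z ^ (α₀ * k) / Hf (α₀ * k)) ≤ ∑' p, g p :=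
        Summable.tsum_le_tsum_of_inj e he_inj (fun c _ => hgnn c) htermwise hsummable hgs
    _ ≤ 3 * ((N : ℝ) + 1) * Real.exp z := hgsum

private lemma gamma_comp_measurable {Ω : Type*} [MeasurableSpace Ω] {g : Ω → ℝ}
    (hg : Measurable g) (h1 : ∀ x, 1 ≤ g x) :
    Measurable fun x => Real.Gamma (g x) := by
  have hc : Continuous fun y : ℝ => Real.Gamma (max 1 y) := by
    rw [continuous_iff_continuousAt]
    intro y
    have hpt : ∀ m : ℕ, max 1 y ≠ -(m : ℝ) := by
      intro m
      have h' : (0:ℝ) < max 1 y := lt_of_lt_of_le one_pos (le_max_left _ _)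
      have h'' : -(m:ℝ) ≤ 0 := by simp [Nat.cast_nonneg]
      intro hcon; rw [hcon] at h'; linarith
    exact ((Real.differentiableAt_Gamma hpt).continuousAt).comp
      ((continuous_const.max continuous_id).continuousAt)
  have heq : (fun x => Real.Gamma (g x)) = fun x => Real.Gamma (max 1 (g x)) :=
    funext fun x => by rw [max_eq_right (h1 x)]
  rw [heq]
  exact hc.measurable.comp hg

private lemma opnorm_pow_apply {E : Type*} [NormedAddCommGroup E] [NormedSpace ℝ E]
    (A : E →L[ℝ] E) : ∀ (k : ℕ) (u : E), ‖(A ^ k) u‖ ≤ ‖A‖ ^ k * ‖u‖ := by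
  intro k
  induction k with
  | zero => intro u; simp
  | succ n ih =>
    intro u
    rw [pow_succ, ContinuousLinearMap.mul_apply]
    calc ‖(A ^ n) (A u)‖ ≤ ‖A‖ ^ n * ‖A u‖ := ih (A u)
      _ ≤ ‖A‖ ^ n * (‖A‖ * ‖u‖) :=
          mul_le_mul_of_nonneg_left (A.le_opNorm u) (by positivity)
      _ = ‖A‖ ^ (n + 1) * ‖u‖ := by ring

/-- The Mittag-Leffler-type series `Σₖ t^{α(x)k}/Γ(α(x)k+1) (Aᵏu₀)(x)`
converges absolutely in `E = L^p(Ω,μ)` for every `t ≥ 0`, and its sum is exponentially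
bounded, with a constant `M` independent of `t` and `u₀`. -/
theorem mittag_leffler_series_convergence
    {Ω : Type*} [MeasurableSpace Ω] (μ : Measure Ω)
    (α₀ a : ℝ) (hα₀ : α₀ ∈ Set.Ioo (0 : ℝ) 1) (ha : a ∈ Set.Icc α₀ 1)
    (α : Ω → ℝ) (hαmeas : Measurable α)
    (hαbd : ∀ᵐ x ∂μ, α x ∈ Set.Icc α₀ a)
    (p : ℝ≥0∞) [Fact (1 ≤ p)]
    (A : Lp ℝ p μ →L[ℝ] Lp ℝ p μ) :
    ∃ M : ℝ, 0 < M ∧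
      ∀ (u₀ : Lp ℝ p μ) (t : ℝ), 0 ≤ t →
        ∃ v : ℕ → Lp ℝ p μ,
          (∀ k : ℕ, ∀ᵐ x ∂μ,
            v k x = t ^ (α x * k) / Real.Gamma (α x * k + 1) * (A ^ k) u₀ x) ∧
          Summable (fun k => ‖v k‖) ∧
          (t ≤ 1 → ‖∑' k, v k‖ ≤ M * Real.exp (‖A‖ ^ (1 / α₀) * t) * ‖u₀‖) ∧
          (1 < t → ‖∑' k, v k‖ ≤ M * Real.exp (‖A‖ ^ (1 / α₀) * t ^ (a / α₀)) * ‖u₀‖) := by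
  obtain ⟨hα0, hα1⟩ := hα₀
  obtain ⟨haα, ha1⟩ := ha
  have hBnn : (0:ℝ) ≤ ‖A‖ := norm_nonneg A
  refine ⟨2 * (3 * ((Nat.ceil (1 / α₀) : ℝ) + 1)), by positivity, ?_⟩
  intro u₀ t ht
  set β : Ω → ℝ := fun x => max α₀ (min a (α x)) with hβ
  have hβmeas : Measurable β := measurable_const.max (measurable_const.min hαmeas)
  have hβ1 : ∀ x, α₀ ≤ β x := fun x => le_max_left _ _
  have hβ2 : ∀ x, β x ≤ a := fun x => max_le haα (min_le_left _ _)
  have hβae : ∀ᵐ x ∂μ, β x = α x := by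
    filter_upwards [hαbd] with x hx
    rw [hβ]; dsimp only
    rw [min_eq_right hx.2, max_eq_right hx.1]
  set φ : ℕ → Ω → ℝ := fun k x => t ^ (β x * k) / Real.Gamma (β x * k + 1) with hφ
  have hβknn : ∀ (k : ℕ) (x : Ω), 0 ≤ β x * k := by
    intro k x
    have := hβ1 x
    have : 0 ≤ β x := by linarith
    positivity
  have hφmeas : ∀ k, Measurable (φ k) := by
    intro k
    rw [hφ]
    apply Measurable.div
    · rcases eq_or_lt_of_le ht with h0 | htpos
      · cases k with
        | zero =>
          have : (fun x => t ^ (β x * ((0:ℕ):ℝ))) = fun _ => (1:ℝ) := by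
            funext x; simp
          rw [this]; exact measurable_const
        | succ n =>
          have : (fun x => t ^ (β x * ((n+1:ℕ):ℝ))) = fun _ => (0:ℝ) := by
            funext x
            rw [← h0]
            apply Real.zero_rpow
            have h1 := hβ1 x
            have : (0:ℝ) < (n:ℝ) + 1 := by positivity
            push_cast
            nlinarith
          rw [this]; exact measurable_const
      · have : (fun x => t ^ (β x * (k:ℝ)))
            = fun x => Real.exp (Real.log t * (β x * k)) := by
          funext x; rw [Real.rpow_def_of_pos htpos]
        rw [this]
        exact Real.measurable_exp.comp (measurable_const.mul (hβmeas.mul measurable_const))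
    · apply gamma_comp_measurable ((hβmeas.mul measurable_const).add measurable_const)
      intro x
      have := hβknn k x
      show (1:ℝ) ≤ β x * (k:ℝ) + 1
      linarith
  set τ : ℕ → ℝ := fun k => if t ≤ 1 then t ^ (α₀ * k) else t ^ (a * k) with hτ
  have hτnn : ∀ k, 0 ≤ τ k := by
    intro k; rw [hτ]; dsimp only; split <;> exact Real.rpow_nonneg ht _
  set Ck : ℕ → ℝ := fun k => 2 * τ k / Hf (α₀ * k) with hCk
  have hCknn : ∀ k, 0 ≤ Ck k := by
    intro k
    have h1 := Hf_pos (α₀ * k)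
    have h2 := hτnn k
    rw [hCk]; positivity
  have hφbd : ∀ (k : ℕ) (x : Ω), |φ k x| ≤ Ck k := by
    intro k x
    have hΓpos : 0 < Real.Gamma (β x * k + 1) := by
      apply Real.Gamma_pos_of_pos
      have := hβknn k x
      linarith
    have hnum_nn : 0 ≤ t ^ (β x * (k:ℝ)) := Real.rpow_nonneg ht _
    have habs : |φ k x| = t ^ (β x * (k:ℝ)) / Real.Gamma (β x * (k:ℝ) + 1) := by
      rw [hφ]; dsimp only; rw [abs_of_nonneg (by positivity)]
    have hexple : α₀ * (k:ℝ) ≤ β x * (k:ℝ) :=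
      mul_le_mul_of_nonneg_right (hβ1 x) (Nat.cast_nonneg k)
    have hnum : t ^ (β x * (k:ℝ)) ≤ τ k := by
      rw [hτ]; dsimp only
      split
      · rename_i htt
        rcases eq_or_lt_of_le ht with h0 | htpos
        · rcases Nat.eq_zero_or_pos k with hk0 | hk1
          · subst hk0; simp
          · have hk1' : (0:ℝ) < (k:ℝ) := by exact_mod_cast hk1
            have hβk : 0 < β x * (k:ℝ) := by
              have := hβ1 x; nlinarith
            rw [← h0, Real.zero_rpow (ne_of_gt hβk)]
            exact Real.rpow_nonneg le_rfl _
        · exact Real.rpow_le_rpow_of_exponent_ge htpos htt hexple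
      · rename_i htt
        push_neg at htt
        apply Real.rpow_le_rpow_of_exponent_le htt.le
        exact mul_le_mul_of_nonneg_right (hβ2 x) (Nat.cast_nonneg k)
    have hden : Hf (α₀ * (k:ℝ)) / 2 ≤ Real.Gamma (β x * (k:ℝ) + 1) :=
      half_Hf_le_gamma (by positivity) hexple
    have hHpos := Hf_pos (α₀ * (k:ℝ))
    rw [habs]
    calc t ^ (β x * (k:ℝ)) / Real.Gamma (β x * (k:ℝ) + 1)
        ≤ τ k / (Hf (α₀ * (k:ℝ)) / 2) := div_le_div₀ (hτnn k) hnum (by positivity) hden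
      _ = Ck k := by rw [hCk]; dsimp only; field_simp
  set f : ℕ → Ω → ℝ := fun k x => φ k x * ((A ^ k) u₀ : Lp ℝ p μ) x with hf
  have hfmeas : ∀ k, AEStronglyMeasurable (f k) μ := fun k =>
    ((hφmeas k).aestronglyMeasurable).mul (Lp.aestronglyMeasurable _)
  have hbd : ∀ k, ∀ᵐ x ∂μ, ‖f k x‖ ≤ Ck k * ‖((A ^ k) u₀ : Lp ℝ p μ) x‖ := by
    intro k
    apply ae_of_all
    intro x
    rw [hf]; dsimp only
    rw [norm_mul]
    exact mul_le_mul_of_nonneg_right (hφbd k x) (norm_nonneg _)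
  have hmem : ∀ k, MemLp (f k) p μ := fun k =>
    MemLp.of_le_mul (Lp.memLp ((A ^ k) u₀)) (hfmeas k) (hbd k)
  set v : ℕ → Lp ℝ p μ := fun k => (hmem k).toLp (f k) with hv
  have hnorm : ∀ k, ‖v k‖ ≤ Ck k * ‖(A ^ k) u₀‖ := by
    intro k
    rw [hv]; dsimp only
    rw [Lp.norm_toLp]
    have hle := eLpNorm_le_mul_eLpNorm_of_ae_le_mul (hbd k) p
    have hfin : ENNReal.ofReal (Ck k) * eLpNorm (((A ^ k) u₀ : Lp ℝ p μ) : Ω → ℝ) p μ ≠ ⊤ :=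
      ENNReal.mul_ne_top ENNReal.ofReal_ne_top (Lp.eLpNorm_ne_top _)
    calc (eLpNorm (f k) p μ).toReal
        ≤ (ENNReal.ofReal (Ck k) * eLpNorm (((A ^ k) u₀ : Lp ℝ p μ) : Ω → ℝ) p μ).toReal :=
          ENNReal.toReal_mono hfin hle
      _ = Ck k * ‖(A ^ k) u₀‖ := by
          rw [ENNReal.toReal_mul, ENNReal.toReal_ofReal (hCknn k), Lp.norm_def]
  set z : ℝ := if t ≤ 1 then ‖A‖ ^ ((1:ℝ)/α₀) * t else ‖A‖ ^ ((1:ℝ)/α₀) * t ^ (a/α₀) with hz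
  have hznn : 0 ≤ z := by
    rw [hz]; split
    · positivity
    · positivity
  have hzk : ∀ k : ℕ, τ k * ‖A‖ ^ k = z ^ (α₀ * (k:ℝ)) := by
    intro k
    rw [hτ, hz]; dsimp only
    by_cases htt : t ≤ 1
    · rw [if_pos htt, if_pos htt]
      rw [Real.mul_rpow (by positivity) ht, ← Real.rpow_natCast (‖A‖) k,
        ← Real.rpow_mul hBnn]
      rw [show (1:ℝ)/α₀ * (α₀ * (k:ℝ)) = (k:ℝ) by field_simp]
      ring
    · rw [if_neg htt, if_neg htt]
      rw [Real.mul_rpow (by positivity) (by positivity), ← Real.rpow_natCast (‖A‖) k,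
        ← Real.rpow_mul hBnn, ← Real.rpow_mul ht]
      rw [show (1:ℝ)/α₀ * (α₀ * (k:ℝ)) = (k:ℝ) by field_simp]
      rw [show a/α₀ * (α₀ * (k:ℝ)) = a * (k:ℝ) by field_simp]
      ring
  have hvk_le : ∀ k, ‖v k‖ ≤ 2 * (z ^ (α₀ * (k:ℝ)) / Hf (α₀ * (k:ℝ))) * ‖u₀‖ := by
    intro k
    have hHpos := Hf_pos (α₀ * (k:ℝ))
    calc ‖v k‖ ≤ Ck k * ‖(A ^ k) u₀‖ := hnorm k
      _ ≤ Ck k * (‖A‖ ^ k * ‖u₀‖) :=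
          mul_le_mul_of_nonneg_left (opnorm_pow_apply A k u₀) (hCknn k)
      _ = 2 * (τ k * ‖A‖ ^ k / Hf (α₀ * (k:ℝ))) * ‖u₀‖ := by
          rw [hCk]; dsimp only; ring
      _ = 2 * (z ^ (α₀ * (k:ℝ)) / Hf (α₀ * (k:ℝ))) * ‖u₀‖ := by rw [hzk k]
  obtain ⟨hsum, hsum_le⟩ := sum_bound hα0 hznn
  have hsummable_rhs : Summable (fun k : ℕ => 2 * (z ^ (α₀ * (k:ℝ)) / Hf (α₀ * (k:ℝ))) * ‖u₀‖) :=
    (hsum.mul_left 2).mul_right _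
  have hsummable_v : Summable (fun k => ‖v k‖) :=
    Summable.of_nonneg_of_le (fun k => norm_nonneg _) hvk_le hsummable_rhs
  have hnorm_total : ‖∑' k, v k‖
      ≤ 2 * (3 * ((Nat.ceil (1 / α₀) : ℝ) + 1)) * Real.exp z * ‖u₀‖ := by
    calc ‖∑' k, v k‖ ≤ ∑' k, ‖v k‖ := norm_tsum_le_tsum_norm hsummable_v
      _ ≤ ∑' k : ℕ, 2 * (z ^ (α₀ * (k:ℝ)) / Hf (α₀ * (k:ℝ))) * ‖u₀‖ :=
          Summable.tsum_le_tsum hvk_le hsummable_v hsummable_rhs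
      _ = 2 * (∑' k : ℕ, z ^ (α₀ * (k:ℝ)) / Hf (α₀ * (k:ℝ))) * ‖u₀‖ := by
          rw [tsum_mul_right, tsum_mul_left]
      _ ≤ 2 * (3 * ((Nat.ceil (1 / α₀) : ℝ) + 1)) * Real.exp z * ‖u₀‖ := by
          have h2 : (0:ℝ) ≤ ‖u₀‖ := norm_nonneg _
          nlinarith [hsum_le, hznn]
  refine ⟨v, ?_, hsummable_v, ?_, ?_⟩
  · intro k
    filter_upwards [(hmem k).coeFn_toLp, hβae] with x hx hbx
    rw [hv]; dsimp only
    rw [hx, hf]; dsimp only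
    rw [hφ]; dsimp only
    rw [hbx]
  · intro htt
    have hzeq : z = ‖A‖ ^ ((1:ℝ)/α₀) * t := by rw [hz, if_pos htt]
    rw [hzeq] at hnorm_total
    exact hnorm_total
  · intro htt
    have hzeq : z = ‖A‖ ^ ((1:ℝ)/α₀) * t ^ (a/α₀) := by rw [hz, if_neg (not_le.mpr htt)]
    rw [hzeq] at hnorm_total
    exact hnorm_total
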